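/- Suppose K_i is stabilizing (A − B K_i Hurwitz) and Θ_i has full column rank. Then the symmetric positive definite solution P_i of the Lyapunov equation (A − B K_i)^T P_i + P_i(A − B K_i) + K_i^T R K_i + Q = 0 is the unique symmetric matrix whose vectorization v(P_i) solves the least-squares regression Θ_i v(P) = Ξ_i exactly. -/

import Mathlib

open Matrix
open scoped Kronecker

abbrev SymIdx (n : ℕ) := {p : Fin n × Fin n // p.1 ≤ p.2}

noncomputable def vfun {n : ℕ} (P : Matrix (Fin n) (Fin n) ℝ) : SymIdx n → ℝ :=
  fun p => if p.1.1 = p.1.2 then P p.1.1 p.1.2 else 2 * P p.1.1 p.1.2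

noncomputable def Bfun {n : ℕ} (x y : Fin n → ℝ) : SymIdx n → ℝ :=
  fun p => if p.1.1 = p.1.2 then x p.1.1 * y p.1.1
           else (x p.1.1 * y p.1.2 + x p.1.2 * y p.1.1) / 2

noncomputable def kron {n : ℕ} (x y : Fin n → ℝ) : Fin n × Fin n → ℝ :=
  fun p => x p.1 * y p.2

def IsHurwitz {n : ℕ} (A : Matrix (Fin n) (Fin n) ℝ) : Prop :=
  ∀ μ ∈ spectrum ℂ (A.map (algebraMap ℝ ℂ)), μ.re < 0

/-!
Write `S = A - B Kᵢ`. Along the trajectory `d/dτ B(x, x) = 2 B(x, ẋ)`, and the three integrals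
in a row of `Θᵢ` add up to `∫ B(x, ẋ - S x)`; by the fundamental theorem of calculus the row is
`2 ∫ B(x, S x)`. For symmetric `P` the pairing `B(a, b) ⬝ v(P)` is `aᵀ P b`, so
`Θᵢ v(P) = IB v(Sᵀ P + P S)` for every symmetric `P` (the rows of `IB` being `∫ B(x, x)`), and
the Lyapunov equation turns the right-hand side at `P = Pᵢ` into `Ξᵢ`. Uniqueness follows from
the full column rank of `Θᵢ` and the injectivity of `v` on symmetric matrices.
-/

theorem Finset.sum_prod_self_eq_sum_le {α M : Type*} [LinearOrder α] [Fintype α]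
    [AddCommMonoid M] (H : α × α → M) :
    ∑ p, H p = ∑ p : {p : α × α // p.1 ≤ p.2},
      if p.1.1 = p.1.2 then H p else H p + H p.1.swap := by
  have lower : ∑ p : α × α, (if p.2 < p.1 then H p else 0) =
      ∑ p : α × α, if p.1 < p.2 then H p.swap else 0 :=
    Fintype.sum_equiv (Equiv.prodComm α α) _ _ fun p => by simp
  rw [← Finset.sum_subtype (univ.filter fun p : α × α => p.1 ≤ p.2) (by simp)
    (fun p => if p.1 = p.2 then H p else H p + H p.swap), Finset.sum_filter]
  calc ∑ p, H p
      = ∑ p : α × α, ((if p.1 ≤ p.2 then H p else 0) + if p.2 < p.1 then H p else 0) := by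
        refine Finset.sum_congr rfl fun p _ => ?_
        rcases lt_or_ge p.2 p.1 with h | h <;> simp [h, not_le.2, h.not_gt]
    _ = _ := by
        rw [Finset.sum_add_distrib, lower, ← Finset.sum_add_distrib]
        refine Finset.sum_congr rfl fun p _ => ?_
        rcases lt_trichotomy p.1 p.2 with h | h | h
        · simp [h.le, h.ne, h]
        · simp [h]
        · simp [h.not_ge, h.not_gt]

section SymmetricCoordinates

variable {n : ℕ}

theorem Bfun_add_right (x y z : Fin n → ℝ) : Bfun x (y + z) = Bfun x y + Bfun x z := by
  funext p; simp only [Bfun, Pi.add_apply]; split_ifs <;> ring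

theorem Bfun_sub_right (x y z : Fin n → ℝ) : Bfun x (y - z) = Bfun x y - Bfun x z := by
  funext p; simp only [Bfun, Pi.sub_apply]; split_ifs <;> ring

theorem Bfun_add_sub (a b : Fin n → ℝ) : Bfun (a + b) (a - b) = Bfun a a - Bfun b b := by
  funext p; simp only [Bfun, Pi.add_apply, Pi.sub_apply]; split_ifs <;> ring

@[fun_prop]
theorem Continuous.Bfun {X : Type*} [TopologicalSpace X] {x y : X → Fin n → ℝ}
    (hx : Continuous x) (hy : Continuous y) : Continuous fun s => Bfun (x s) (y s) :=
  continuous_pi fun p => by unfold _root_.Bfun; split_ifs <;> fun_prop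

theorem HasDerivAt.Bfun_self {x : ℝ → Fin n → ℝ} {x' : Fin n → ℝ} {τ : ℝ}
    (hx : HasDerivAt x x' τ) :
    HasDerivAt (fun s => Bfun (x s) (x s)) ((2 : ℝ) • Bfun (x τ) x') τ := by
  rw [hasDerivAt_pi] at hx ⊢
  rintro ⟨⟨i, j⟩, -⟩
  by_cases h : i = j
  · simp only [Bfun, h, if_true, Pi.smul_apply, smul_eq_mul]
    exact ((hx j).fun_mul (hx j)).congr_deriv (by ring)
  · simp only [Bfun, h, if_false, Pi.smul_apply, smul_eq_mul]
    exact (((hx i).fun_mul (hx j)).fun_add ((hx j).fun_mul (hx i)) |>.div_const 2).congr_deriv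
      (by ring)

theorem vfun_neg (P : Matrix (Fin n) (Fin n) ℝ) : vfun (-P) = -vfun P := by
  funext p; simp only [vfun, Pi.neg_apply, Matrix.neg_apply]; split_ifs <;> ring

theorem vfun_injOn : Set.InjOn vfun {P : Matrix (Fin n) (Fin n) ℝ | P.IsSymm} := by
  intro P hP P' hP' h
  have upper : ∀ i j, i ≤ j → P i j = P' i j := fun i j hij => by
    have := congrFun h ⟨(i, j), hij⟩
    simp only [vfun] at this
    split_ifs at this <;> linarith
  ext i j
  rcases le_total i j with hij | hji
  · exact upper i j hij
  · rw [← hP.apply i j, ← hP'.apply i j]; exact upper j i hji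

theorem Bfun_dotProduct_vfun (a b : Fin n → ℝ) {P : Matrix (Fin n) (Fin n) ℝ}
    (hP : P.IsSymm) : Bfun a b ⬝ᵥ vfun P = a ⬝ᵥ P *ᵥ b := by
  have expand : a ⬝ᵥ P *ᵥ b = ∑ p : Fin n × Fin n, a p.1 * P p.1 p.2 * b p.2 := by
    simp [dotProduct, mulVec, Fintype.sum_prod_type, Finset.mul_sum, mul_assoc]
  rw [expand, Finset.sum_prod_self_eq_sum_le, dotProduct]
  refine Finset.sum_congr rfl fun ⟨⟨i, j⟩, _⟩ _ => ?_
  by_cases h : i = j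
  · subst h; simp only [Bfun, vfun, if_true, Prod.swap]; ring
  · simp only [Bfun, vfun, h, if_false, Prod.swap, ← hP.apply i j]
    ring

theorem two_mul_Bfun_mulVec_dotProduct_vfun {P : Matrix (Fin n) (Fin n) ℝ}
    (hP : P.IsSymm) (S : Matrix (Fin n) (Fin n) ℝ) (y : Fin n → ℝ) :
    2 * (Bfun y (S *ᵥ y) ⬝ᵥ vfun P) = Bfun y y ⬝ᵥ vfun (Sᵀ * P + P * S) := by
  have hsymm : (Sᵀ * P + P * S).IsSymm := by
    simp only [IsSymm, transpose_add, transpose_mul, transpose_transpose, hP.eq, add_comm]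
  have hswap : y ⬝ᵥ (Sᵀ * P) *ᵥ y = y ⬝ᵥ (P * S) *ᵥ y := by
    rw [← mulVec_mulVec, ← mulVec_mulVec, dotProduct_mulVec, vecMul_transpose,
      dotProduct_mulVec y P, ← mulVec_transpose, hP.eq, dotProduct_comm]
  rw [Bfun_dotProduct_vfun _ _ hP, Bfun_dotProduct_vfun _ _ hsymm, add_mulVec, dotProduct_add,
    hswap, mulVec_mulVec]
  ring

theorem kron_eq_vec_vecMulVec (x y : Fin n → ℝ) : kron x y = vec (vecMulVec y x) := by
  ext p; simp [kron, vec, vecMulVec, mul_comm]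

theorem one_kronecker_mulVec_kron (C : Matrix (Fin n) (Fin n) ℝ) (x y : Fin n → ℝ) :
    ((1 : Matrix (Fin n) (Fin n) ℝ) ⊗ₖ C) *ᵥ kron x y = kron x (C *ᵥ y) := by
  rw [kron_eq_vec_vecMulVec, kron_eq_vec_vecMulVec, kronecker_mulVec_vec, transpose_one, mul_one,
    mul_vecMulVec]

theorem mulVec_Bfun_self_of_lift {W : Matrix (SymIdx n) (Fin n × Fin n) ℝ}
    {Wr : Matrix (Fin n × Fin n) (SymIdx n) ℝ} (hW : ∀ x y : Fin n → ℝ, Bfun x y = W *ᵥ kron x y)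
    (hWr : ∀ x : Fin n → ℝ, kron x x = Wr *ᵥ Bfun x x) (C : Matrix (Fin n) (Fin n) ℝ)
    (x : Fin n → ℝ) :
    (W * ((1 : Matrix (Fin n) (Fin n) ℝ) ⊗ₖ C) * Wr) *ᵥ Bfun x x = Bfun x (C *ᵥ x) := by
  rw [← mulVec_mulVec, ← mulVec_mulVec, ← hWr, one_kronecker_mulVec_kron, ← hW]

end SymmetricCoordinates

section Integrals

open MeasureTheory

theorem LinearMap.intervalIntegral_comp_comm {E F : Type*} [NormedAddCommGroup E]
    [NormedSpace ℝ E] [FiniteDimensional ℝ E] [NormedAddCommGroup F] [NormedSpace ℝ F]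
    [CompleteSpace F] (L : E →ₗ[ℝ] F) {φ : ℝ → E} {a b : ℝ}
    (hφ : IntervalIntegrable φ volume a b) :
    ∫ τ in a..b, L (φ τ) = L (∫ τ in a..b, φ τ) :=
  haveI := FiniteDimensional.complete ℝ E
  (LinearMap.toContinuousLinearMap L).intervalIntegral_comp_comm hφ

theorem intervalIntegral_dotProduct {ι : Type*} [Fintype ι] {F : ℝ → ι → ℝ} {a b : ℝ}
    (hF : IntervalIntegrable F volume a b) (c : ι → ℝ) :
    (∫ τ in a..b, F τ) ⬝ᵥ c = ∫ τ in a..b, F τ ⬝ᵥ c := by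
  simpa [dotProduct_comm c] using ((dotProductBilin ℝ ℝ c).intervalIntegral_comp_comm hF).symm

theorem mulVec_intervalIntegral {ι κ : Type*} [Fintype ι] [Fintype κ] (M : Matrix κ ι ℝ)
    {F : ℝ → ι → ℝ} {a b : ℝ} (hF : IntervalIntegrable F volume a b) :
    M *ᵥ ∫ τ in a..b, F τ = ∫ τ in a..b, M *ᵥ F τ :=
  (M.mulVecLin.intervalIntegral_comp_comm hF).symm

theorem Bfun_add_sub_eq_two_smul_integral {n : ℕ} {x x' : ℝ → Fin n → ℝ}
    (hx : ∀ τ, HasDerivAt x (x' τ) τ) (hx' : Continuous x') (a b : ℝ) :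
    Bfun (x b + x a) (x b - x a) = (2 : ℝ) • ∫ τ in a..b, Bfun (x τ) (x' τ) := by
  have hxc : Continuous x := continuous_iff_continuousAt.2 fun τ => (hx τ).continuousAt
  rw [Bfun_add_sub, ← intervalIntegral.integral_smul,
    intervalIntegral.integral_eq_sub_of_hasDerivAt (fun τ _ => (hx τ).Bfun_self)]
  exact ((continuous_const (y := (2 : ℝ))).smul (hxc.Bfun hx')).intervalIntegrable a b

theorem regressor_row_dotProduct_vfun {n m : ℕ} {A : Matrix (Fin n) (Fin n) ℝ}
    {B : Matrix (Fin n) (Fin m) ℝ} {K : Matrix (Fin m) (Fin n) ℝ}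
    {W : Matrix (SymIdx n) (Fin n × Fin n) ℝ} {Wr : Matrix (Fin n × Fin n) (SymIdx n) ℝ}
    (hW : ∀ x y : Fin n → ℝ, Bfun x y = W *ᵥ kron x y)
    (hWr : ∀ x : Fin n → ℝ, kron x x = Wr *ᵥ Bfun x x)
    {f : (Fin n → ℝ) → (Fin n → ℝ)} {g : (Fin n → ℝ) → Matrix (Fin n) (Fin m) ℝ}
    {u : ℝ → (Fin m → ℝ)} {x : ℝ → (Fin n → ℝ)}
    (hf : Continuous f) (hg : Continuous g) (hu : Continuous u)
    (hx : ∀ τ : ℝ, HasDerivAt x (f (x τ) + g (x τ) *ᵥ u τ) τ) (a b : ℝ)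
    {P : Matrix (Fin n) (Fin n) ℝ} (hP : P.IsSymm) :
    (Bfun (x b + x a) (x b - x a) -
        (2 : ℝ) • ((W * ((1 : Matrix (Fin n) (Fin n) ℝ) ⊗ₖ (B * K)) * Wr) *ᵥ
            (∫ τ in a..b, Bfun (x τ) (x τ)) +
          (∫ τ in a..b, Bfun (x τ) (g (x τ) *ᵥ u τ)) +
          (∫ τ in a..b, Bfun (x τ) (f (x τ) - A *ᵥ x τ)))) ⬝ᵥ vfun P =
      (∫ τ in a..b, Bfun (x τ) (x τ)) ⬝ᵥ vfun ((A - B * K)ᵀ * P + P * (A - B * K)) := by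
  set S := A - B * K
  have hxc : Continuous x := continuous_iff_continuousAt.2 fun τ => (hx τ).continuousAt
  have hint : ∀ y : ℝ → Fin n → ℝ, Continuous y →
      IntervalIntegrable (fun τ => Bfun (x τ) (y τ)) volume a b :=
    fun y hy => (hxc.Bfun hy).intervalIntegrable a b
  have feedback : (W * ((1 : Matrix (Fin n) (Fin n) ℝ) ⊗ₖ (B * K)) * Wr) *ᵥ
      (∫ τ in a..b, Bfun (x τ) (x τ)) = ∫ τ in a..b, Bfun (x τ) ((B * K) *ᵥ x τ) := by
    simp only [mulVec_intervalIntegral _ (hint x hxc), mulVec_Bfun_self_of_lift hW hWr]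
  have closed_loop : (∫ τ in a..b, Bfun (x τ) ((B * K) *ᵥ x τ)) +
      (∫ τ in a..b, Bfun (x τ) (g (x τ) *ᵥ u τ)) +
      (∫ τ in a..b, Bfun (x τ) (f (x τ) - A *ᵥ x τ)) =
      (∫ τ in a..b, Bfun (x τ) (f (x τ) + g (x τ) *ᵥ u τ)) -
        ∫ τ in a..b, Bfun (x τ) (S *ᵥ x τ) := by
    rw [← intervalIntegral.integral_add (hint _ (by fun_prop)) (hint _ (by fun_prop)),
      ← intervalIntegral.integral_add ((hint _ (by fun_prop)).add (hint _ (by fun_prop)))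
        (hint _ (by fun_prop)),
      ← intervalIntegral.integral_sub (hint _ (by fun_prop)) (hint _ (by fun_prop))]
    congr 1 with τ
    rw [← Bfun_add_right, ← Bfun_add_right, ← Bfun_sub_right, sub_mulVec]
    congr 1; abel
  rw [feedback, closed_loop, Bfun_add_sub_eq_two_smul_integral hx (by fun_prop), smul_sub,
    sub_sub_cancel, smul_dotProduct, intervalIntegral_dotProduct (hint _ (by fun_prop)),
    intervalIntegral_dotProduct (hint x hxc), smul_eq_mul, ← intervalIntegral.integral_const_mul]
  simp only [two_mul_Bfun_mulVec_dotProduct_vfun hP]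

end Integrals

theorem eirl_regression_unique_general {n m l : ℕ}
    (A : Matrix (Fin n) (Fin n) ℝ) (B : Matrix (Fin n) (Fin m) ℝ)
    (Q : Matrix (Fin n) (Fin n) ℝ) (R : Matrix (Fin m) (Fin m) ℝ)
    (Ki : Matrix (Fin m) (Fin n) ℝ)
    (W : Matrix (SymIdx n) (Fin n × Fin n) ℝ)
    (hW : ∀ x y : Fin n → ℝ, Bfun x y = W.mulVec (kron x y))
    (Wr : Matrix (Fin n × Fin n) (SymIdx n) ℝ)
    (hWr : ∀ x : Fin n → ℝ, kron x x = Wr.mulVec (Bfun x x))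
    (f : (Fin n → ℝ) → (Fin n → ℝ)) (g : (Fin n → ℝ) → Matrix (Fin n) (Fin m) ℝ)
    (u : ℝ → (Fin m → ℝ)) (x : ℝ → (Fin n → ℝ))
    (hf : Continuous f) (hg : Continuous g) (hu : Continuous u)
    (hx : ∀ τ : ℝ, HasDerivAt x (f (x τ) + (g (x τ)).mulVec (u τ)) τ)
    (t : Fin (l + 1) → ℝ)
    (IB Θ : Matrix (Fin l) (SymIdx n) ℝ) (Ξ : Fin l → ℝ)
    (hIB : ∀ k : Fin l,
      IB k = ∫ τ in t k.castSucc..t k.succ, Bfun (x τ) (x τ))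
    (hΘ : ∀ k : Fin l,
      Θ k = Bfun (x (t k.succ) + x (t k.castSucc)) (x (t k.succ) - x (t k.castSucc)) -
        (2 : ℝ) • ((W * ((1 : Matrix (Fin n) (Fin n) ℝ) ⊗ₖ (B * Ki)) * Wr).mulVec (IB k) +
          (∫ τ in t k.castSucc..t k.succ, Bfun (x τ) ((g (x τ)).mulVec (u τ))) +
          (∫ τ in t k.castSucc..t k.succ, Bfun (x τ) (f (x τ) - A.mulVec (x τ)))))
    (hΞ : ∀ k : Fin l, Ξ k = -(IB k ⬝ᵥ vfun (Q + Kiᵀ * R * Ki)))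
    (hΘrank : ∀ c : SymIdx n → ℝ, Θ.mulVec c = 0 → c = 0)
    (Pi : Matrix (Fin n) (Fin n) ℝ)
    (hPisymm : Pi.IsSymm)
    (hALE : (A - B * Ki)ᵀ * Pi + Pi * (A - B * Ki) + Kiᵀ * R * Ki + Q = 0) :
    Θ.mulVec (vfun Pi) = Ξ ∧
    ∀ P : Matrix (Fin n) (Fin n) ℝ, P.IsSymm → Θ.mulVec (vfun P) = Ξ → P = Pi := by
  have regression : ∀ P : Matrix (Fin n) (Fin n) ℝ, P.IsSymm →
      Θ *ᵥ vfun P = IB *ᵥ vfun ((A - B * Ki)ᵀ * P + P * (A - B * Ki)) := fun P hP => by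
    funext k
    show Θ k ⬝ᵥ _ = IB k ⬝ᵥ _
    rw [hΘ k, hIB k]
    exact regressor_row_dotProduct_vfun hW hWr hf hg hu hx _ _ hP
  have lyapunov : (A - B * Ki)ᵀ * Pi + Pi * (A - B * Ki) = -(Q + Kiᵀ * R * Ki) :=
    eq_neg_of_add_eq_zero_left (by rw [← hALE]; abel)
  have forward : Θ *ᵥ vfun Pi = Ξ := by
    funext k
    rw [regression Pi hPisymm, lyapunov, vfun_neg, hΞ k]
    exact dotProduct_neg _ _
  refine ⟨forward, fun P hP hPΞ => vfun_injOn hP hPisymm (sub_eq_zero.1 (hΘrank _ ?_))⟩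
  rw [mulVec_sub, hPΞ, forward, sub_self]

/-- If `Kᵢ` is stabilizing and `Θᵢ` has full column rank, then the symmetric positive
definite Lyapunov solution `Pᵢ` is the unique symmetric matrix whose vectorization
solves the regression `Θᵢ v(P) = Ξᵢ` exactly. -/
theorem eirl_regression_unique {n m l : ℕ}
    (A : Matrix (Fin n) (Fin n) ℝ) (B : Matrix (Fin n) (Fin m) ℝ)
    (Q : Matrix (Fin n) (Fin n) ℝ) (R : Matrix (Fin m) (Fin m) ℝ)
    (Ki : Matrix (Fin m) (Fin n) ℝ)
    (hKi : IsHurwitz (A - B * Ki))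
    (W : Matrix (SymIdx n) (Fin n × Fin n) ℝ)
    (hW : ∀ x y : Fin n → ℝ, Bfun x y = W.mulVec (kron x y))
    (Wr : Matrix (Fin n × Fin n) (SymIdx n) ℝ)
    (hWr : ∀ x : Fin n → ℝ, kron x x = Wr.mulVec (Bfun x x))
    (f : (Fin n → ℝ) → (Fin n → ℝ)) (g : (Fin n → ℝ) → Matrix (Fin n) (Fin m) ℝ)
    (u : ℝ → (Fin m → ℝ)) (x : ℝ → (Fin n → ℝ))
    (hf : Continuous f) (hg : Continuous g) (hu : Continuous u)
    (hx : ∀ τ : ℝ, HasDerivAt x (f (x τ) + (g (x τ)).mulVec (u τ)) τ)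
    (t : Fin (l + 1) → ℝ) (ht : StrictMono t)
    (IB Θ : Matrix (Fin l) (SymIdx n) ℝ) (Ξ : Fin l → ℝ)
    (hIB : ∀ k : Fin l,
      IB k = ∫ τ in t k.castSucc..t k.succ, Bfun (x τ) (x τ))
    (hΘ : ∀ k : Fin l,
      Θ k = Bfun (x (t k.succ) + x (t k.castSucc)) (x (t k.succ) - x (t k.castSucc)) -
        (2 : ℝ) • ((W * ((1 : Matrix (Fin n) (Fin n) ℝ) ⊗ₖ (B * Ki)) * Wr).mulVec (IB k) +
          (∫ τ in t k.castSucc..t k.succ, Bfun (x τ) ((g (x τ)).mulVec (u τ))) +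
          (∫ τ in t k.castSucc..t k.succ, Bfun (x τ) (f (x τ) - A.mulVec (x τ)))))
    (hΞ : ∀ k : Fin l, Ξ k = -(IB k ⬝ᵥ vfun (Q + Kiᵀ * R * Ki)))
    (hΘrank : ∀ c : SymIdx n → ℝ, Θ.mulVec c = 0 → c = 0)
    (Pi : Matrix (Fin n) (Fin n) ℝ)
    (hPisymm : Pi.IsSymm) (hPipd : Pi.PosDef)
    (hALE : (A - B * Ki)ᵀ * Pi + Pi * (A - B * Ki) + Kiᵀ * R * Ki + Q = 0) :
    Θ.mulVec (vfun Pi) = Ξ ∧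
    ∀ P : Matrix (Fin n) (Fin n) ℝ, P.IsSymm → Θ.mulVec (vfun P) = Ξ → P = Pi :=
  eirl_regression_unique_general A B Q R Ki W hW Wr hWr f g u x hf hg hu hx t IB Θ Ξ hIB hΘ hΞ
    hΘrank Pi hPisymm hALE
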